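/- arXiv:2302.14014 — 7 statements merged into one kernel-verified Lean document; each statement's English description precedes it below -/
import Mathlib

section
/- Let L ⊣_J R be a relative adjunction (J : A ⥤ E, L : A ⥤ C, R : C ⥤ E, with natural bijections ♯ : Hom(L.obj x, c) ≃ Hom(J.obj x, R.obj c)). Then the data T₀ x := R.obj (L.obj x), η_x := ♯(𝟙 (L.obj x)), and f† := R.map ((♯⁻¹ f)) for f : J.obj x ⟶ R.obj (L.obj y), forms a relative monad on J. -/
open CategoryTheory CategoryTheory.Limits

universe v₁ v₂ v₃ v₄ v₅ u₁ u₂ u₃ u₄ u₅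

/-- A relative adjunction `L ⊣_J R`: bijections `(L.obj x ⟶ c) ≃ (J.obj x ⟶ R.obj c)`,
natural in `x` and `c`. -/
structure RelAdjCore {A : Type u₁} {E : Type u₂} {C : Type u₃}
    [Category.{v₁} A] [Category.{v₂} E] [Category.{v₃} C]
    (J : A ⥤ E) (L : A ⥤ C) (R : C ⥤ E) where
  equiv : ∀ (x : A) (c : C), (L.obj x ⟶ c) ≃ (J.obj x ⟶ R.obj c)
  nat_left : ∀ {x' x : A} (a : x' ⟶ x) {c : C} (g : L.obj x ⟶ c),
    equiv x' c (L.map a ≫ g) = J.map a ≫ equiv x c g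
  nat_right : ∀ {x : A} {c c' : C} (g : L.obj x ⟶ c) (h : c ⟶ c'),
    equiv x c' (g ≫ h) = equiv x c g ≫ R.map h

namespace RelAdjCore

variable {A : Type u₁} {E : Type u₂} {C : Type u₃}
  [Category.{v₁} A] [Category.{v₂} E] [Category.{v₃} C]
  {J : A ⥤ E} {L : A ⥤ C} {R : C ⥤ E} (adj : RelAdjCore J L R)

theorem equiv_symm_comp {x : A} {c c' : C} (f : J.obj x ⟶ R.obj c) (h : c ⟶ c') :
    (adj.equiv x c').symm (f ≫ R.map h) = (adj.equiv x c).symm f ≫ h := by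
  rw [Equiv.symm_apply_eq, adj.nat_right, Equiv.apply_symm_apply]

theorem equiv_id_comp_map {x : A} {c : C} (g : L.obj x ⟶ c) :
    adj.equiv x (L.obj x) (𝟙 (L.obj x)) ≫ R.map g = adj.equiv x c g := by
  rw [← adj.nat_right, Category.id_comp]

end RelAdjCore

/-- Every relative adjunction `L ⊣_J R` induces a relative monad on `J` in
Kleisli-triple form: `T₀ x = R (L x)`, `η_x = ♯(𝟙)`, `f† = R.map (♯⁻¹ f)`. -/
theorem stmt4 {A : Type u₁} {E : Type u₂} {C : Type u₃}
    [Category.{v₁} A] [Category.{v₂} E] [Category.{v₃} C]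
    (J : A ⥤ E) (L : A ⥤ C) (R : C ⥤ E) (adj : RelAdjCore J L R) :
    (∀ x : A,
      R.map ((adj.equiv x (L.obj x)).symm (adj.equiv x (L.obj x) (𝟙 (L.obj x)))) =
        𝟙 (R.obj (L.obj x))) ∧
    (∀ (x y : A) (f : J.obj x ⟶ R.obj (L.obj y)),
      adj.equiv x (L.obj x) (𝟙 (L.obj x)) ≫ R.map ((adj.equiv x (L.obj y)).symm f) = f) ∧
    (∀ (x y z : A) (f : J.obj x ⟶ R.obj (L.obj y)) (g : J.obj y ⟶ R.obj (L.obj z)),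
      R.map ((adj.equiv x (L.obj z)).symm (f ≫ R.map ((adj.equiv y (L.obj z)).symm g))) =
        R.map ((adj.equiv x (L.obj y)).symm f) ≫ R.map ((adj.equiv y (L.obj z)).symm g)) := by
  refine ⟨fun x => ?_, fun x y f => ?_, fun x y z f g => ?_⟩
  · rw [Equiv.symm_apply_apply, R.map_id]
  · rw [adj.equiv_id_comp_map, Equiv.apply_symm_apply]
  · rw [adj.equiv_symm_comp, R.map_comp]
end

section
/- Right relative adjoints are unique up to natural isomorphism when the root is dense: if J : A ⥤ E is a dense functor and L ⊣_J R and L ⊣_J R' are relative adjunctions with the same left adjoint L : A ⥤ C, then R ≅ R'. -/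
open CategoryTheory CategoryTheory.Limits

universe v₁ v₂ v₃ v₄ v₅ u₁ u₂ u₃ u₄ u₅

/-- The restricted Yoneda functor along `J`. -/
def restrictYoneda {A : Type u₁} {E : Type u₂} [Category.{v₁} A] [Category.{v₂} E]
    (J : A ⥤ E) : E ⥤ Aᵒᵖ ⥤ Type v₂ :=
  yoneda ⋙ (Functor.whiskeringLeft Aᵒᵖ Eᵒᵖ (Type v₂)).obj J.op

/-- `J` is dense: the restricted Yoneda functor `E ⥤ (Aᵒᵖ ⥤ Type)` is fully faithful. -/
def IsDenseFunctor {A : Type u₁} {E : Type u₂} [Category.{v₁} A] [Category.{v₂} E]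
    (J : A ⥤ E) : Prop :=
  (restrictYoneda J).Full ∧ (restrictYoneda J).Faithful

/-- If the root `J` is dense, right relative adjoints are unique up to natural
isomorphism. -/
theorem stmt8 {A : Type u₁} {E : Type u₂} {C : Type u₃}
    [Category.{v₁} A] [Category.{v₂} E] [Category.{v₃} C]
    (J : A ⥤ E) (hJ : IsDenseFunctor J) (L : A ⥤ C) (R R' : C ⥤ E)
    (adj : RelAdjCore J L R) (adj' : RelAdjCore J L R') :
    Nonempty (R ≅ R') := by
  haveI : (restrictYoneda J).Full := hJ.1
  haveI : (restrictYoneda J).Faithful := hJ.2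
  let FF : (restrictYoneda J).FullyFaithful := Functor.FullyFaithful.ofFullyFaithful _
  -- componentwise iso of presheaves
  let φ : ∀ c : C, (restrictYoneda J).obj (R.obj c) ≅ (restrictYoneda J).obj (R'.obj c) :=
    fun c => NatIso.ofComponents
      (fun x => Equiv.toIso (((adj.equiv x.unop c).symm.trans (adj'.equiv x.unop c))))
      (by
        intro x x' a
        ext f
        change J.obj x.unop ⟶ R.obj c at f
        have hf : adj.equiv x'.unop c ((adj.equiv x'.unop c).symm (J.map a.unop ≫ f))
            = adj.equiv x'.unop c (L.map a.unop ≫ (adj.equiv x.unop c).symm f) := by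
          rw [adj.nat_left, Equiv.apply_symm_apply, Equiv.apply_symm_apply]
        have h1 : (adj.equiv x'.unop c).symm (J.map a.unop ≫ f)
            = L.map a.unop ≫ (adj.equiv x.unop c).symm f :=
          (adj.equiv x'.unop c).injective (by simpa using hf)
        show adj'.equiv x'.unop c ((adj.equiv x'.unop c).symm (J.map a.unop ≫ f))
            = J.map a.unop ≫ adj'.equiv x.unop c ((adj.equiv x.unop c).symm f)
        rw [h1, adj'.nat_left])
  have hnat : ∀ {c c' : C} (h : c ⟶ c'),
      (φ c).hom ≫ (restrictYoneda J).map (R'.map h)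
        = (restrictYoneda J).map (R.map h) ≫ (φ c').hom := by
    intro c c' h
    ext x f
    change J.obj x.unop ⟶ R.obj c at f
    have h1 : (adj.equiv x.unop c').symm (f ≫ R.map h)
        = (adj.equiv x.unop c).symm f ≫ h := by
      apply (adj.equiv x.unop c').injective
      rw [adj.nat_right, Equiv.apply_symm_apply, Equiv.apply_symm_apply]
    show adj'.equiv x.unop c ((adj.equiv x.unop c).symm f) ≫ R'.map h
        = adj'.equiv x.unop c' ((adj.equiv x.unop c').symm (f ≫ R.map h))
    rw [h1, adj'.nat_right]
  exact ⟨NatIso.ofComponents (fun c => FF.preimageIso (φ c)) (by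
    intro c c' h
    apply (restrictYoneda J).map_injective
    simp only [Functor.map_comp, Functor.FullyFaithful.preimageIso_hom,
      Functor.FullyFaithful.map_preimage]
    exact (hnat h).symm)⟩
end

section
/- Let L ⊣_J R be a relative adjunction with dense root J : A ⥤ E. Then R : C ⥤ E preserves all limits: for any diagram F : I ⥤ C with limit cone c in C, R maps c to a limit cone in E. -/
open CategoryTheory CategoryTheory.Limits

universe v₁ v₂ v₃ v₄ v₅ u₁ u₂ u₃ u₄ u₅

/-- A right relative adjoint with dense root preserves all limits. -/
theorem stmt10 {A : Type u₁} {E : Type u₂} {C : Type u₃} {I : Type u₄}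
    [Category.{v₁} A] [Category.{v₂} E] [Category.{v₃} C] [Category.{v₄} I]
    (J : A ⥤ E) (hJ : IsDenseFunctor J) (L : A ⥤ C) (R : C ⥤ E)
    (adj : RelAdjCore J L R) (F : I ⥤ C) (c : Cone F) (hc : IsLimit c) :
    Nonempty (IsLimit (R.mapCone c)) := by
  haveI : (restrictYoneda J).Full := hJ.1
  haveI : (restrictYoneda J).Faithful := hJ.2
  -- it suffices to show that restricted Yoneda maps the cone to a limit cone
  refine ⟨isLimitOfReflects (restrictYoneda J) ?_⟩
  -- limits in a functor category are detected pointwise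
  refine evaluationJointlyReflectsLimits _ fun k => ?_
  set x := k.unop with hx
  -- the evaluated cone: pt = (J.obj x ⟶ R.obj c.pt)
  refine IsLimit.mk (fun s => TypeCat.ofHom fun e => adj.equiv x c.pt (hc.lift
    ⟨L.obj x, { app := fun i => (adj.equiv x (F.obj i)).symm (show J.obj x ⟶ R.obj (F.obj i) from s.π.app i e),
                naturality := fun i j f => ?_ }⟩)) (fun s i => ?_) (fun s m hm => ?_)
  · -- naturality of the cone over F with apex L.obj x
    dsimp
    rw [Category.id_comp]
    apply (adj.equiv x (F.obj j)).injective
    rw [adj.nat_right]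
    erw [Equiv.apply_symm_apply, Equiv.apply_symm_apply]
    have := types_congr_hom (s.π.naturality f) e
    dsimp at this
    rw [this]
    rfl
  · -- fac
    ext e
    have : ∀ (g : L.obj x ⟶ c.pt),
        (adj.equiv x c.pt g) ≫ R.map (c.π.app i) = adj.equiv x (F.obj i) (g ≫ c.π.app i) :=
      fun g => (adj.nat_right g (c.π.app i)).symm
    show (adj.equiv x c.pt _) ≫ R.map (c.π.app i) = s.π.app i e
    rw [this, hc.fac, Equiv.apply_symm_apply]
  · -- uniqueness
    ext e
    show m e = adj.equiv x c.pt _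
    apply (adj.equiv x c.pt).symm.injective
    rw [Equiv.symm_apply_apply]
    refine hc.uniq ⟨L.obj x, _⟩ _ fun i => ?_
    apply (adj.equiv x (F.obj i)).injective
    rw [adj.nat_right]
    erw [Equiv.apply_symm_apply, Equiv.apply_symm_apply]
    have := types_congr_hom (hm i) e
    dsimp at this
    rw [← this]
    rfl
end

section
/- Transport of relative monads along a relative adjunction: let (L' ⋙ J) ⊣_{J'} R' be a relative adjunction (L' : A ⥤ B, J : B ⥤ D, J' : A ⥤ E, R' : D ⥤ E) and let T be a relative monad on J. Then the assignment x ↦ R'.obj (T₀ (L'.obj x)), with unit given by transposing 𝟙 followed by R' applied to the unit of T, and extension given by transposing, applying †, and applying R', defines a relative monad on J'. Moreover this assignment is functorial: a morphism of relative monads on J induces a morphism of the transported relative monads on J'. -/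
open CategoryTheory CategoryTheory.Limits

universe v₁ v₂ v₃ v₄ v₅ u₁ u₂ u₃ u₄ u₅

/-- A relative monad on `J : A ⥤ E` in Kleisli-triple form. -/
structure RelMonad {A : Type u₁} {E : Type u₂} [Category.{v₁} A] [Category.{v₂} E]
    (J : A ⥤ E) where
  obj : A → E
  unit : ∀ x : A, J.obj x ⟶ obj x
  ext : ∀ {x y : A}, (J.obj x ⟶ obj y) → (obj x ⟶ obj y)
  ext_unit : ∀ x : A, ext (unit x) = 𝟙 (obj x)
  unit_ext : ∀ {x y : A} (f : J.obj x ⟶ obj y), unit x ≫ ext f = f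
  ext_ext : ∀ {x y z : A} (f : J.obj x ⟶ obj y) (g : J.obj y ⟶ obj z),
    ext (f ≫ ext g) = ext f ≫ ext g

/-- A morphism of relative monads on `J`. -/
structure RelMonadHom {A : Type u₁} {E : Type u₂} [Category.{v₁} A] [Category.{v₂} E]
    {J : A ⥤ E} (T T' : RelMonad J) where
  app : ∀ x : A, T.obj x ⟶ T'.obj x
  unit_app : ∀ x : A, T.unit x ≫ app x = T'.unit x
  ext_app : ∀ {x y : A} (f : J.obj x ⟶ T.obj y),
    T.ext f ≫ app y = app x ≫ T'.ext (f ≫ app y)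

/-- The transported unit along a relative adjunction `(L' ⋙ J) ⊣_{J'} R'`. -/
def transUnit {A : Type u₁} {B : Type u₂} {D : Type u₄} {E : Type u₅}
    [Category.{v₁} A] [Category.{v₂} B] [Category.{v₄} D] [Category.{v₅} E]
    {L' : A ⥤ B} {J : B ⥤ D} {J' : A ⥤ E} {R' : D ⥤ E}
    (adj : RelAdjCore J' (L' ⋙ J) R') (T : RelMonad J) (x : A) :
    J'.obj x ⟶ R'.obj (T.obj (L'.obj x)) :=
  adj.equiv x (T.obj (L'.obj x)) (T.unit (L'.obj x))

/-- The transported extension operator along a relative adjunction. -/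
def transExt {A : Type u₁} {B : Type u₂} {D : Type u₄} {E : Type u₅}
    [Category.{v₁} A] [Category.{v₂} B] [Category.{v₄} D] [Category.{v₅} E]
    {L' : A ⥤ B} {J : B ⥤ D} {J' : A ⥤ E} {R' : D ⥤ E}
    (adj : RelAdjCore J' (L' ⋙ J) R') (T : RelMonad J) {x y : A}
    (g : J'.obj x ⟶ R'.obj (T.obj (L'.obj y))) :
    R'.obj (T.obj (L'.obj x)) ⟶ R'.obj (T.obj (L'.obj y)) :=
  R'.map (T.ext ((adj.equiv x (T.obj (L'.obj y))).symm g))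

theorem RelAdjCore.equiv_symm_comp_map {A : Type u₁} {E : Type u₂} {C : Type u₃}
    [Category.{v₁} A] [Category.{v₂} E] [Category.{v₃} C]
    {J : A ⥤ E} {L : A ⥤ C} {R : C ⥤ E} (adj : RelAdjCore J L R)
    {x : A} {c c' : C} (f : J.obj x ⟶ R.obj c) (h : c ⟶ c') :
    (adj.equiv x c').symm (f ≫ R.map h) = (adj.equiv x c).symm f ≫ h :=
  (adj.equiv x c').injective (by
    rw [Equiv.apply_symm_apply, adj.nat_right, Equiv.apply_symm_apply])

section Transport

variable {A : Type u₁} {B : Type u₂} {D : Type u₄} {E : Type u₅}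
    [Category.{v₁} A] [Category.{v₂} B] [Category.{v₄} D] [Category.{v₅} E]
    {L' : A ⥤ B} {J : B ⥤ D} {J' : A ⥤ E} {R' : D ⥤ E}
    (adj : RelAdjCore J' (L' ⋙ J) R') (T : RelMonad J)

theorem transExt_transUnit (x : A) :
    transExt adj T (transUnit adj T x) = 𝟙 (R'.obj (T.obj (L'.obj x))) := by
  rw [transExt, transUnit, Equiv.symm_apply_apply, T.ext_unit]
  exact R'.map_id _

theorem transUnit_comp_transExt {x y : A} (g : J'.obj x ⟶ R'.obj (T.obj (L'.obj y))) :
    transUnit adj T x ≫ transExt adj T g = g := by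
  rw [transExt, transUnit, ← adj.nat_right, T.unit_ext, Equiv.apply_symm_apply]

theorem transExt_comp_transExt {x y z : A} (g : J'.obj x ⟶ R'.obj (T.obj (L'.obj y)))
    (h : J'.obj y ⟶ R'.obj (T.obj (L'.obj z))) :
    transExt adj T (g ≫ transExt adj T h) = transExt adj T g ≫ transExt adj T h := by
  rw [transExt, transExt, transExt, adj.equiv_symm_comp_map, T.ext_ext, Functor.map_comp]

variable {T} {T₂ : RelMonad J} (τ : RelMonadHom T T₂)

theorem transUnit_comp_map_app (x : A) :
    transUnit adj T x ≫ R'.map (τ.app (L'.obj x)) = transUnit adj T₂ x := by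
  rw [transUnit, transUnit, ← adj.nat_right, τ.unit_app]

theorem transExt_comp_map_app {x y : A} (g : J'.obj x ⟶ R'.obj (T.obj (L'.obj y))) :
    transExt adj T g ≫ R'.map (τ.app (L'.obj y)) =
      R'.map (τ.app (L'.obj x)) ≫ transExt adj T₂ (g ≫ R'.map (τ.app (L'.obj y))) := by
  rw [transExt, transExt, ← Functor.map_comp, τ.ext_app, Functor.map_comp,
    adj.equiv_symm_comp_map]

end Transport

/-- Transport of a relative monad on `J` along a relative adjunction
`(L' ⋙ J) ⊣_{J'} R'` yields a relative monad on `J'`, functorially in the relative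
monad. -/
theorem stmt12 {A : Type u₁} {B : Type u₂} {D : Type u₄} {E : Type u₅}
    [Category.{v₁} A] [Category.{v₂} B] [Category.{v₄} D] [Category.{v₅} E]
    (L' : A ⥤ B) (J : B ⥤ D) (J' : A ⥤ E) (R' : D ⥤ E)
    (adj : RelAdjCore J' (L' ⋙ J) R') (T : RelMonad J) :
    (∀ x : A, transExt adj T (transUnit adj T x) = 𝟙 (R'.obj (T.obj (L'.obj x)))) ∧
    (∀ (x y : A) (g : J'.obj x ⟶ R'.obj (T.obj (L'.obj y))),
      transUnit adj T x ≫ transExt adj T g = g) ∧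
    (∀ (x y z : A) (g : J'.obj x ⟶ R'.obj (T.obj (L'.obj y)))
        (h : J'.obj y ⟶ R'.obj (T.obj (L'.obj z))),
      transExt adj T (g ≫ transExt adj T h) = transExt adj T g ≫ transExt adj T h) ∧
    (∀ (T₂ : RelMonad J) (τ : RelMonadHom T T₂),
      (∀ x : A, transUnit adj T x ≫ R'.map (τ.app (L'.obj x)) = transUnit adj T₂ x) ∧
      (∀ (x y : A) (g : J'.obj x ⟶ R'.obj (T.obj (L'.obj y))),
        transExt adj T g ≫ R'.map (τ.app (L'.obj y)) =
          R'.map (τ.app (L'.obj x)) ≫ transExt adj T₂ (g ≫ R'.map (τ.app (L'.obj y))))) :=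
  ⟨transExt_transUnit adj T, fun _ _ => transUnit_comp_transExt adj T,
    fun _ _ _ => transExt_comp_transExt adj T,
    fun _ τ => ⟨transUnit_comp_map_app adj τ, fun _ _ => transExt_comp_map_app adj τ⟩⟩
end

section
/- The Kleisli construction yields a resolution: for a relative monad T on J : A ⥤ E, there is a functor v_T : Kl(T) ⥤ E given on objects by x ↦ T₀ x and on morphisms (f : J.obj x ⟶ T₀ y) by f†, and the Kleisli inclusion k_T : A ⥤ Kl(T) is left J-adjoint to v_T; moreover the relative monad induced by this relative adjunction equals T. -/
open CategoryTheory CategoryTheory.Limits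

universe v₁ v₂ v₃ v₄ v₅ u₁ u₂ u₃ u₄ u₅

/-- The relative monad on `J` induced by a relative adjunction `L ⊣_J R`. -/
def RelAdjCore.induced {A : Type u₁} {E : Type u₂} {C : Type u₃}
    [Category.{v₁} A] [Category.{v₂} E] [Category.{v₃} C]
    {J : A ⥤ E} {L : A ⥤ C} {R : C ⥤ E} (adj : RelAdjCore J L R) : RelMonad J where
  obj x := R.obj (L.obj x)
  unit x := adj.equiv x (L.obj x) (𝟙 (L.obj x))
  ext {x y} f := R.map ((adj.equiv x (L.obj y)).symm f)
  ext_unit x := by simp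
  unit_ext {x y} f := by
    rw [← adj.nat_right, Category.id_comp, Equiv.apply_symm_apply]
  ext_ext {x y z} f g := by
    show R.map ((adj.equiv x (L.obj z)).symm
        (f ≫ R.map ((adj.equiv y (L.obj z)).symm g))) =
      R.map ((adj.equiv x (L.obj y)).symm f) ≫ R.map ((adj.equiv y (L.obj z)).symm g)
    rw [← R.map_comp]
    congr 1
    apply (adj.equiv x (L.obj z)).injective
    rw [Equiv.apply_symm_apply, adj.nat_right, Equiv.apply_symm_apply]

/-- The Kleisli category of a relative monad: objects those of `A`,
hom-sets `Hom(x, y) := (J.obj x ⟶ T.obj y)`. -/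
def RelKleisli {A : Type u₁} {E : Type u₂} [Category.{v₁} A] [Category.{v₂} E]
    {J : A ⥤ E} (_T : RelMonad J) : Type u₁ := A

instance RelKleisli.category {A : Type u₁} {E : Type u₂} [Category.{v₁} A]
    [Category.{v₂} E] {J : A ⥤ E} (T : RelMonad J) : Category.{v₂} (RelKleisli T) where
  Hom x y := J.obj x ⟶ T.obj y
  id x := T.unit x
  comp {x y z} f g := (f : J.obj x ⟶ T.obj y) ≫ T.ext g
  id_comp {x y} f := T.unit_ext f
  comp_id {x y} f := by
    have e : ∀ f' : J.obj x ⟶ T.obj y, f' ≫ T.ext (T.unit y) = f' := by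
      intro f'; exact (congrArg (fun k => f' ≫ k) (T.ext_unit y)).trans (Category.comp_id f')
    exact e f
  assoc {w x y z} f g h := by
    have e : ∀ (f' : J.obj w ⟶ T.obj x) (g' : J.obj x ⟶ T.obj y)
        (h' : J.obj y ⟶ T.obj z),
        (f' ≫ T.ext g') ≫ T.ext h' = f' ≫ T.ext (g' ≫ T.ext h') := by
      intro f' g' h'
      exact (Category.assoc f' (T.ext g') (T.ext h')).trans
        (congrArg (fun k => f' ≫ k) (T.ext_ext g' h').symm)
    exact e f g h

/-- The identity-on-objects Kleisli inclusion. -/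
def kT {A : Type u₁} {E : Type u₂} [Category.{v₁} A] [Category.{v₂} E]
    {J : A ⥤ E} (T : RelMonad J) : A ⥤ RelKleisli T where
  obj x := x
  map {x y} a := (J.map a ≫ T.unit y : J.obj x ⟶ T.obj y)
  map_id x := by
    have e : J.map (𝟙 x) ≫ T.unit x = T.unit x := by simp
    exact e
  map_comp {x y z} a b := by
    have e : J.map (a ≫ b) ≫ T.unit z =
        (J.map a ≫ T.unit y) ≫ T.ext (J.map b ≫ T.unit z) := by
      rw [Category.assoc, T.unit_ext, J.map_comp, Category.assoc]
    exact e

/-- The comparison functor `Kl(T) ⥤ E`, sending `x` to `T₀ x` and `f` to `f†`. -/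
def vT {A : Type u₁} {E : Type u₂} [Category.{v₁} A] [Category.{v₂} E]
    {J : A ⥤ E} (T : RelMonad J) : RelKleisli T ⥤ E where
  obj x := T.obj x
  map {x y} f := T.ext f
  map_id x := T.ext_unit x
  map_comp {x y z} f g := by
    have e : T.ext ((f : J.obj x ⟶ T.obj y) ≫ T.ext g) = T.ext f ≫ T.ext g :=
      T.ext_ext f g
    exact e

/-- The Kleisli construction yields a resolution: the Kleisli inclusion `k_T` is left
`J`-adjoint to `v_T`, the transposition bijection is the identity, and the relative
monad induced by this relative adjunction is `T` itself. -/
theorem stmt14 {A : Type u₁} {E : Type u₂} [Category.{v₁} A] [Category.{v₂} E]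
    (J : A ⥤ E) (T : RelMonad J) :
    ∃ adj : RelAdjCore J (kT T) (vT T),
      (∀ (x : A) (y : RelKleisli T) (f : (kT T).obj x ⟶ y), adj.equiv x y f = f) ∧
      adj.induced = T := by
  refine ⟨⟨fun x c => Equiv.refl _, ?_, ?_⟩, fun _ _ _ => rfl, ?_⟩
  · intro x' x a c g
    show ((J.map a ≫ T.unit x) ≫ T.ext g : J.obj x' ⟶ T.obj c) = J.map a ≫ g
    exact (Category.assoc _ _ _).trans (congrArg (fun k => J.map a ≫ k) (T.unit_ext (x := x) (y := c) g))
  · intro x c c' g h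
    rfl
  · obtain ⟨obj, unit, ext, h1, h2, h3⟩ := T
    rfl
end

section
/- The Eilenberg–Moore resolution: for a relative monad T on J : A ⥤ E, the assignment x ↦ (T₀ x, †) (each T₀ x with the extension operator of T as its algebra structure) extends to a functor f_T : A ⥤ EM(T), and f_T is left J-adjoint to the forgetful functor u_T : EM(T) ⥤ E; the induced relative monad of this relative adjunction is T. Moreover, this resolution is terminal: for any resolution L ⊣_J R of T there is a unique functor G : C ⥤ EM(T) with L ⋙ G = f_T and G ⋙ u_T = R. -/
open CategoryTheory CategoryTheory.Limits

universe v₁ v₂ v₃ v₄ v₅ u₁ u₂ u₃ u₄ u₅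

/-- An Eilenberg–Moore algebra for a relative monad `T` on `J`. -/
structure EMAlgebra {A : Type u₁} {E : Type u₂} [Category.{v₁} A] [Category.{v₂} E]
    {J : A ⥤ E} (T : RelMonad J) where
  carrier : E
  str : ∀ {x : A}, (J.obj x ⟶ carrier) → (T.obj x ⟶ carrier)
  str_natural : ∀ {x' x : A} (a : x' ⟶ x) (f : J.obj x ⟶ carrier),
    str (J.map a ≫ f) = T.ext (J.map a ≫ T.unit x) ≫ str f
  unit_str : ∀ {x : A} (f : J.obj x ⟶ carrier), T.unit x ≫ str f = f
  str_str : ∀ {x y : A} (g : J.obj x ⟶ T.obj y) (f : J.obj y ⟶ carrier),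
    str (g ≫ str f) = T.ext g ≫ str f

/-- A morphism of Eilenberg–Moore algebras. -/
structure EMHom {A : Type u₁} {E : Type u₂} [Category.{v₁} A] [Category.{v₂} E]
    {J : A ⥤ E} {T : RelMonad J} (a b : EMAlgebra T) where
  hom : a.carrier ⟶ b.carrier
  str_hom : ∀ {x : A} (f : J.obj x ⟶ a.carrier), a.str f ≫ hom = b.str (f ≫ hom)

lemma EMHom.ext' {A : Type u₁} {E : Type u₂} [Category.{v₁} A] [Category.{v₂} E]
    {J : A ⥤ E} {T : RelMonad J} {a b : EMAlgebra T} {f g : EMHom a b}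
    (h : f.hom = g.hom) : f = g := by
  cases f; cases g; cases h; rfl

/-- The Eilenberg–Moore category of a relative monad. -/
instance EMAlgebra.category {A : Type u₁} {E : Type u₂} [Category.{v₁} A]
    [Category.{v₂} E] {J : A ⥤ E} (T : RelMonad J) : Category (EMAlgebra T) where
  Hom := EMHom
  id a :=
    { hom := 𝟙 a.carrier
      str_hom := fun {x} f => by simp }
  comp {a b c} f g :=
    { hom := f.hom ≫ g.hom
      str_hom := fun {x} h => by
        rw [← Category.assoc, f.str_hom, g.str_hom, Category.assoc] }
  id_comp f := EMHom.ext' (Category.id_comp _)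
  comp_id f := EMHom.ext' (Category.comp_id _)
  assoc f g h := EMHom.ext' (Category.assoc _ _ _)

/-- The forgetful functor from the Eilenberg–Moore category to `E`. -/
def emForget {A : Type u₁} {E : Type u₂} [Category.{v₁} A] [Category.{v₂} E]
    {J : A ⥤ E} (T : RelMonad J) : EMAlgebra T ⥤ E where
  obj a := a.carrier
  map h := h.hom
  map_id a := rfl
  map_comp f g := rfl

/-- The free Eilenberg–Moore algebra on `x`. -/
def freeEM {A : Type u₁} {E : Type u₂} [Category.{v₁} A] [Category.{v₂} E]
    {J : A ⥤ E} (T : RelMonad J) (x : A) : EMAlgebra T where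
  carrier := T.obj x
  str f := T.ext f
  str_natural {x' x₀} a f := by
    have e : T.ext (J.map a ≫ f) = T.ext (J.map a ≫ T.unit x₀) ≫ T.ext f := by
      conv_lhs => rw [← T.unit_ext f]
      rw [← Category.assoc, T.ext_ext]
    exact e
  unit_str f := T.unit_ext f
  str_str g f := T.ext_ext g f

/-- The free-algebra functor `A ⥤ EM(T)`. -/
def fT {A : Type u₁} {E : Type u₂} [Category.{v₁} A] [Category.{v₂} E]
    {J : A ⥤ E} (T : RelMonad J) : A ⥤ EMAlgebra T where
  obj x := freeEM T x
  map {x y} a :=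
    { hom := T.ext (J.map a ≫ T.unit y)
      str_hom := fun {w} f => (T.ext_ext f (J.map a ≫ T.unit y)).symm }
  map_id x := by
    apply EMHom.ext'
    show T.ext (J.map (𝟙 x) ≫ T.unit x) = 𝟙 (T.obj x)
    rw [J.map_id, Category.id_comp, T.ext_unit]
  map_comp {x y z} a b := by
    apply EMHom.ext'
    show T.ext (J.map (a ≫ b) ≫ T.unit z) =
      T.ext (J.map a ≫ T.unit y) ≫ T.ext (J.map b ≫ T.unit z)
    rw [← T.ext_ext]
    congr 1
    rw [J.map_comp, Category.assoc, Category.assoc, T.unit_ext]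


section Aux

variable {A : Type u₁} {E : Type u₂} [Category.{v₁} A] [Category.{v₂} E] {J : A ⥤ E}

/-- Two relative monads with (definitionally) equal data are equal. -/
lemma relMonadExtAux {S T : RelMonad J} (hobj : S.obj = T.obj)
    (hunit : HEq S.unit T.unit)
    (hext : HEq (fun (x y : A) (f : J.obj x ⟶ S.obj y) => S.ext f)
                (fun (x y : A) (f : J.obj x ⟶ T.obj y) => T.ext f)) : S = T := by
  obtain ⟨o1, u1, e1, _, _, _⟩ := S
  obtain ⟨o2, u2, e2, _, _, _⟩ := T
  dsimp at hobj hunit hext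
  subst hobj
  have hu : u1 = u2 := eq_of_heq hunit
  subst hu
  have he : @e1 = @e2 := by
    have h := eq_of_heq hext
    funext x y f
    exact congrFun (congrFun (congrFun h x) y) f
  subst he
  rfl

/-- Extensionality for Eilenberg–Moore algebras. -/
lemma emAlgebraExt {T : RelMonad J} {a b : EMAlgebra T} (hc : a.carrier = b.carrier)
    (hs : ∀ (x : A) (f : J.obj x ⟶ a.carrier),
      a.str f = b.str (f ≫ eqToHom hc) ≫ eqToHom hc.symm) : a = b := by
  obtain ⟨c1, s1, _, _, _⟩ := a
  obtain ⟨c2, s2, _, _, _⟩ := b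
  dsimp at hc hs
  subst hc
  have hss : @s1 = @s2 := by
    funext x f
    simpa using hs x f
  subst hss
  rfl

/-- Transport of the algebra structure along an equality of algebras. -/
lemma emStrCongr {T : RelMonad J} {a b : EMAlgebra T} (h : a = b) (x : A)
    (f : J.obj x ⟶ a.carrier) :
    a.str f = b.str (f ≫ eqToHom (congrArg EMAlgebra.carrier h)) ≫
      eqToHom (congrArg EMAlgebra.carrier h).symm := by
  subst h; simp

lemma emEqToHomHom {T : RelMonad J} {a b : EMAlgebra T} (h : a = b) :
    (eqToHom h).hom = eqToHom (congrArg EMAlgebra.carrier h) := by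
  subst h; rfl

/-- The Eilenberg–Moore relative adjunction. -/
def emAdj (T : RelMonad J) : RelAdjCore J (fT T) (emForget T) where
  equiv x a :=
    { toFun := fun h => T.unit x ≫ h.hom
      invFun := fun f =>
        { hom := a.str f
          str_hom := fun {w} g => (a.str_str g f).symm }
      left_inv := fun h => by
        apply EMHom.ext'
        show a.str (T.unit x ≫ h.hom) = h.hom
        erw [← h.str_hom (T.unit x)]
        show T.ext (T.unit x) ≫ h.hom = h.hom
        erw [T.ext_unit, Category.id_comp]
      right_inv := fun f => a.unit_str f }
  nat_left := fun {x' x} a' {c} g => by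
    show T.unit x' ≫ (T.ext (J.map a' ≫ T.unit x) ≫ g.hom) = J.map a' ≫ (T.unit x ≫ g.hom)
    erw [← Category.assoc, T.unit_ext, Category.assoc]
  nat_right := fun {x} {c c'} g h => by
    show T.unit x ≫ (g.hom ≫ h.hom) = (T.unit x ≫ g.hom) ≫ h.hom
    erw [Category.assoc]

lemma emAdj_induced (T : RelMonad J) : (emAdj T).induced = T := by
  refine relMonadExtAux rfl (heq_of_eq (funext fun x => ?_)) (heq_of_eq rfl)
  exact Category.comp_id (T.unit x)

variable {C : Type u₃} [Category.{v₃} C] {L : A ⥤ C} {R : C ⥤ E}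

lemma symm_nat_left (adj : RelAdjCore J L R) {x' x : A} (a : x' ⟶ x) {c : C}
    (f : J.obj x ⟶ R.obj c) :
    (adj.equiv x' c).symm (J.map a ≫ f) = L.map a ≫ (adj.equiv x c).symm f := by
  apply (adj.equiv x' c).injective
  rw [Equiv.apply_symm_apply, adj.nat_left, Equiv.apply_symm_apply]

lemma symm_nat_right (adj : RelAdjCore J L R) {x : A} {c c' : C}
    (f : J.obj x ⟶ R.obj c) (h : c ⟶ c') :
    (adj.equiv x c').symm (f ≫ R.map h) = (adj.equiv x c).symm f ≫ h := by
  apply (adj.equiv x c').injective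
  rw [Equiv.apply_symm_apply, adj.nat_right, Equiv.apply_symm_apply]

lemma symm_unit_comp (adj : RelAdjCore J L R) {x' x : A} (a : x' ⟶ x) :
    (adj.equiv x' (L.obj x)).symm (J.map a ≫ adj.equiv x (L.obj x) (𝟙 (L.obj x))) =
      L.map a := by
  rw [← adj.nat_left]
  simp

lemma unit_comp_map (adj : RelAdjCore J L R) {x : A} {c : C} (g : L.obj x ⟶ c) :
    adj.equiv x (L.obj x) (𝟙 (L.obj x)) ≫ R.map g = adj.equiv x c g := by
  rw [← adj.nat_right, Category.id_comp]

/-- The mediating functor from a resolution to the Eilenberg–Moore category. -/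
def resG (adj : RelAdjCore J L R) : C ⥤ EMAlgebra adj.induced where
  obj c :=
    { carrier := R.obj c
      str := fun {x} f => R.map ((adj.equiv x c).symm f)
      str_natural := fun {x' x} a f => by
        show R.map ((adj.equiv x' c).symm (J.map a ≫ f)) =
          R.map ((adj.equiv x' (L.obj x)).symm
            (J.map a ≫ adj.equiv x (L.obj x) (𝟙 (L.obj x)))) ≫
          R.map ((adj.equiv x c).symm f)
        rw [symm_nat_left, symm_unit_comp, ← R.map_comp]
      unit_str := fun {x} f => by
        show adj.equiv x (L.obj x) (𝟙 (L.obj x)) ≫ R.map ((adj.equiv x c).symm f) = f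
        rw [unit_comp_map, Equiv.apply_symm_apply]
      str_str := fun {x y} g f => by
        show R.map ((adj.equiv x c).symm (g ≫ R.map ((adj.equiv y c).symm f))) =
          R.map ((adj.equiv x (L.obj y)).symm g) ≫ R.map ((adj.equiv y c).symm f)
        erw [symm_nat_right, R.map_comp] }
  map {c c'} h :=
    { hom := R.map h
      str_hom := fun {x} f => by
        show R.map ((adj.equiv x c).symm f) ≫ R.map h =
          R.map ((adj.equiv x c').symm (f ≫ R.map h))
        rw [symm_nat_right, R.map_comp] }
  map_id c := EMHom.ext' (R.map_id c)
  map_comp f g := EMHom.ext' (R.map_comp f g)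

end Aux

/-- The Eilenberg–Moore resolution: the free-algebra functor `f_T` is left `J`-adjoint
to the forgetful functor `u_T`, with transposition `h ↦ η ≫ h` and reverse
transposition `f ↦ f‡`; the induced relative monad is `T`; and this resolution is
terminal: every resolution of `T` factors uniquely through it. -/
theorem stmt17 {A : Type u₁} {E : Type u₂} [Category.{v₁} A] [Category.{v₂} E]
    (J : A ⥤ E) (T : RelMonad J) :
    ∃ adjEM : RelAdjCore J (fT T) (emForget T),
      (∀ (x : A) (a : EMAlgebra T) (h : (fT T).obj x ⟶ a),
        adjEM.equiv x a h = T.unit x ≫ h.hom) ∧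
      (∀ (x : A) (a : EMAlgebra T) (f : J.obj x ⟶ a.carrier),
        ((adjEM.equiv x a).symm f).hom = a.str f) ∧
      adjEM.induced = T ∧
      (∀ {C : Type u₃} [Category.{v₃} C] (L : A ⥤ C) (R : C ⥤ E)
        (adj : RelAdjCore J L R), adj.induced = T →
        ∃! G : C ⥤ EMAlgebra T, L ⋙ G = fT T ∧ G ⋙ emForget T = R) := by
  refine ⟨emAdj T, fun x a h => rfl, fun x a f => rfl, emAdj_induced T, ?_⟩
  intro C _ L R adj hT
  subst hT
  set T := adj.induced with hTdef
  refine ⟨resG adj, ⟨?_, ?_⟩, ?_⟩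
  · -- L ⋙ resG adj = fT T
    refine CategoryTheory.Functor.ext (fun x => rfl) ?_
    intro x y a
    erw [eqToHom_refl, eqToHom_refl, Category.comp_id, Category.id_comp]
    apply EMHom.ext'
    show R.map (L.map a) =
      T.ext (J.map a ≫ T.unit y)
    show R.map (L.map a) =
      R.map ((adj.equiv x (L.obj y)).symm
        (J.map a ≫ adj.equiv y (L.obj y) (𝟙 (L.obj y))))
    rw [symm_unit_comp]
  · -- resG adj ⋙ emForget T = R
    rfl
  · -- uniqueness
    intro G' ⟨hL', hR'⟩
    have hobj : ∀ c, G'.obj c = (resG adj).obj c := by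
      intro c
      have hc : (G'.obj c).carrier = R.obj c := Functor.congr_obj hR' c
      refine emAlgebraExt hc ?_
      intro x f
      set f' : J.obj x ⟶ R.obj c := f ≫ eqToHom hc with hf'
      set g : L.obj x ⟶ c := (adj.equiv x c).symm f' with hg
      have halg : G'.obj (L.obj x) = (fT T).obj x := Functor.congr_obj hL' x
      have hcL : (G'.obj (L.obj x)).carrier = R.obj (L.obj x) :=
        congrArg EMAlgebra.carrier halg
      have hm : (G'.map g).hom = eqToHom hcL ≫ R.map g ≫ eqToHom hc.symm := by
        have := Functor.congr_hom hR' g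
        exact this
      have key := (G'.map g).str_hom (T.unit x ≫ eqToHom hcL.symm)
      have hstrL : (G'.obj (L.obj x)).str (T.unit x ≫ eqToHom hcL.symm) =
          eqToHom hcL.symm := by
        rw [emStrCongr halg]
        have : ((T.unit x ≫ eqToHom hcL.symm) ≫
            eqToHom (congrArg EMAlgebra.carrier halg)) = T.unit x := by
          erw [Category.assoc, eqToHom_trans]
          exact Category.comp_id _
        rw [this]
        show T.ext (T.unit x) ≫ _ = _
        erw [T.ext_unit, Category.id_comp]
        rfl
      rw [hstrL, hm] at key
      have harg : (T.unit x ≫ eqToHom hcL.symm) ≫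
          eqToHom hcL ≫ R.map g ≫ eqToHom hc.symm = f := by
        have h1 : T.unit x ≫ R.map g = f' := by
          show adj.equiv x (L.obj x) (𝟙 (L.obj x)) ≫ R.map g = f'
          rw [unit_comp_map, hg, Equiv.apply_symm_apply]
        erw [Category.assoc, ← Category.assoc (eqToHom hcL.symm), eqToHom_trans,
          eqToHom_refl, Category.id_comp, ← Category.assoc, h1, hf']
        simp
      rw [harg] at key
      show (G'.obj c).str f = R.map ((adj.equiv x c).symm (f ≫ eqToHom hc)) ≫ eqToHom hc.symm
      rw [← key]
      erw [← Category.assoc, eqToHom_trans, eqToHom_refl, Category.id_comp]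
    refine CategoryTheory.Functor.ext hobj ?_
    intro c c' k
    apply EMHom.ext'
    show (G'.map k).hom = (eqToHom (hobj c) ≫ (resG adj).map k ≫ eqToHom (hobj c').symm).hom
    show (G'.map k).hom =
      (eqToHom (hobj c)).hom ≫ R.map k ≫ (eqToHom (hobj c').symm).hom
    rw [emEqToHomHom, emEqToHomHom]
    have := Functor.congr_hom hR' k
    exact this
end

section
/- Strict morphisms of relative adjunctions are exactly those inducing the same relative monad: let L ⊣_J R and L' ⊣_J R' be relative adjunctions (with apices C, C') and let F : C ⥤ C' be a functor with L ⋙ F = L' and F ⋙ R' = R. Then F commutes with the transposition bijections (i.e. ♯'(F.map g) = ♯(g) for all g : L.obj x ⟶ c under the identifications) if and only if the two relative adjunctions induce the same relative monad on J (same unit and same extension operator). -/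
open CategoryTheory CategoryTheory.Limits

universe v₁ v₂ v₃ v₄ v₅ u₁ u₂ u₃ u₄ u₅

theorem RelMonad.ext' {A : Type u₁} {E : Type u₂} [Category.{v₁} A] [Category.{v₂} E]
    {J : A ⥤ E} {M N : RelMonad J} (hobj : M.obj = N.obj)
    (hunit : ∀ x, M.unit x ≫ eqToHom (congrFun hobj x) = N.unit x)
    (hext : ∀ (x y : A) (f : J.obj x ⟶ N.obj y),
      eqToHom (congrFun hobj x).symm ≫
        M.ext (f ≫ eqToHom (congrFun hobj y).symm) ≫ eqToHom (congrFun hobj y) = N.ext f) :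
    M = N := by
  obtain ⟨obj, unit, ext, _, _, _⟩ := M
  obtain ⟨obj', unit', ext', _, _, _⟩ := N
  dsimp at hobj
  subst hobj
  simp only [eqToHom_refl, Category.comp_id, Category.id_comp] at hunit hext
  have hu : unit = unit' := funext hunit
  have he : @ext = @ext' := funext fun x => funext fun y => funext (hext x y)
  subst hu
  subst he
  rfl

/-- A functor between the apices of two relative adjunctions commuting strictly with
the left and right adjoints is a strict morphism (commutes with the transposition
bijections) if and only if the two relative adjunctions induce the same relative
monad on `J`. -/
theorem stmt18 {A : Type u₁} {E : Type u₂} {C : Type u₃} {C' : Type u₄}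
    [Category.{v₁} A] [Category.{v₂} E] [Category.{v₃} C] [Category.{v₄} C']
    (J : A ⥤ E) (L : A ⥤ C) (R : C ⥤ E) (L' : A ⥤ C') (R' : C' ⥤ E)
    (adj : RelAdjCore J L R) (adj' : RelAdjCore J L' R')
    (F : C ⥤ C') (hL : L ⋙ F = L') (hR : F ⋙ R' = R) :
    (∀ (x : A) (c : C) (g : L.obj x ⟶ c),
      adj'.equiv x (F.obj c) (eqToHom (Functor.congr_obj hL x).symm ≫ F.map g) ≫
          eqToHom (Functor.congr_obj hR c) =
        adj.equiv x c g) ↔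
      adj.induced = adj'.induced := by
  subst hL
  subst hR
  simp only [eqToHom_refl, Category.comp_id, Category.id_comp]
  constructor
  · intro h
    refine RelMonad.ext' rfl (fun x => ?_) (fun x y f => ?_)
    · change adj.equiv x (L.obj x) (𝟙 _) ≫ 𝟙 ((F ⋙ R').obj (L.obj x)) =
        adj'.equiv x ((L ⋙ F).obj x) (𝟙 _)
      simpa using (h x (L.obj x) (𝟙 (L.obj x))).symm
    · change 𝟙 ((F ⋙ R').obj (L.obj x)) ≫ (F ⋙ R').map ((adj.equiv x (L.obj y)).symm
          (f ≫ 𝟙 ((F ⋙ R').obj (L.obj y)))) ≫ 𝟙 ((F ⋙ R').obj (L.obj y)) =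
        R'.map ((adj'.equiv x ((L ⋙ F).obj y)).symm f)
      simp only [eqToHom_refl, Category.comp_id, Category.id_comp]
      erw [Category.comp_id]
      show (F ⋙ R').map ((adj.equiv x (L.obj y)).symm f) =
        R'.map ((adj'.equiv x ((L ⋙ F).obj y)).symm f)
      show R'.map (F.map ((adj.equiv x (L.obj y)).symm f)) =
        R'.map ((adj'.equiv x ((L ⋙ F).obj y)).symm f)
      congr 1
      apply (adj'.equiv x ((L ⋙ F).obj y)).injective
      erw [Equiv.apply_symm_apply]
      have h3 := h x (L.obj y) ((adj.equiv x (L.obj y)).symm f)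
      erw [Equiv.apply_symm_apply] at h3
      simpa using h3
  · intro h x c g
    have huh : HEq adj.induced.unit adj'.induced.unit := by rw [h]
    have hu := congrFun (eq_of_heq huh) x
    dsimp [RelAdjCore.induced] at hu
    have h1 : adj.equiv x c g = adj.equiv x (L.obj x) (𝟙 _) ≫ (F ⋙ R').map g := by
      rw [← adj.nat_right, Category.id_comp]
    have h2 : adj'.equiv x (F.obj c) (F.map g) =
        adj'.equiv x ((L ⋙ F).obj x) (𝟙 _) ≫ R'.map (F.map g) := by
      rw [← adj'.nat_right]
      congr 1
      exact (Category.id_comp _).symm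
    rw [h1, h2]
    exact (congrArg (· ≫ R'.map (F.map g)) hu).symm
end
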